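/- Let G be a topological group and let H₁, …, H_k be subgroups that boundedly generate G. Let E be a uniformly convex real Banach space, and assume that each pair (G, H_i), i = 1, …, k, has relative property (T_E). Then for every continuous linear isometric representation π of G on E such that the only vector ξ ∈ E with π(g)ξ = ξ for all g ∈ G is ξ = 0, there exist a compact subset K ⊆ G and a constant ε > 0 such that for every ξ ∈ E with ‖ξ‖ = 1 one has sup_{g ∈ K} ‖π(g)ξ − ξ‖ ≥ ε. -/

import Mathlib

/-- A real normed space `E` is *uniformly convex* if for every `ε ∈ (0,2]` there is `δ > 0`
such that all unit vectors `ξ, η` with `‖ξ - η‖ ≥ ε` satisfy `‖(ξ + η)/2‖ ≤ 1 - δ`. -/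
def UniformlyConvex (E : Type*) [NormedAddCommGroup E] [NormedSpace ℝ E] : Prop :=
  ∀ ε : ℝ, 0 < ε → ε ≤ 2 → ∃ δ : ℝ, 0 < δ ∧
    ∀ ξ η : E, ‖ξ‖ = 1 → ‖η‖ = 1 → ε ≤ ‖ξ - η‖ → ‖(2⁻¹ : ℝ) • (ξ + η)‖ ≤ 1 - δ

/-!
By uniform convexity the function `x ↦ ⨆ g, ‖x - π g ξ‖` has a unique minimiser, the Chebyshev
centre of the orbit of `ξ`. Uniqueness makes it `π`-invariant, and it lies within
`⨆ g, ‖π g ξ - ξ‖` of `ξ`; so when `0` is the only fixed vector, no unit vector is moved by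
less than `1` by all of `G`.

Take `γ = 1 / (2 (ν + 1))`. A unit vector that is `ε`-almost invariant on the union of the
compact sets provided by relative property (T_E) is `γ`-close to an `H i`-fixed vector for each
`i`, hence moved by at most `2 γ` by every element of every `H i`, and by bounded generation
by at most `2 γ ν < 1` by every element of `G`.
-/

open Set Filter Topology

lemma UniformlyConvex.uniformConvexSpace {E : Type*} [NormedAddCommGroup E] [NormedSpace ℝ E]
    (hE : UniformlyConvex E) : UniformConvexSpace E where
  uniform_convex ε hε := by
    obtain ⟨δ, hδ, h⟩ := hE (min ε 2) (lt_min hε two_pos) (min_le_right _ _)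
    refine ⟨2 * δ, by positivity, fun x hx y hy hxy => ?_⟩
    have := h x y hx hy ((min_le_left _ _).trans hxy)
    rw [norm_smul_of_nonneg (by norm_num)] at this
    linarith

theorem exists_forall_norm_add_le_two_sub_mul {E : Type*} [SeminormedAddCommGroup E]
    [NormedSpace ℝ E] [UniformConvexSpace E] {ε : ℝ} (hε : 0 < ε) :
    ∃ δ, 0 < δ ∧ ∀ ⦃R : ℝ⦄, 0 < R → ∀ ⦃x y : E⦄, ‖x‖ ≤ R → ‖y‖ ≤ R → ε * R ≤ ‖x - y‖ →
      ‖x + y‖ ≤ (2 - δ) * R := by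
  obtain ⟨δ, hδ, h⟩ := exists_forall_closed_ball_dist_add_le_two_sub E hε
  refine ⟨δ, hδ, fun R hR x y hx hy hxy => ?_⟩
  have hscale (z : E) : ‖R⁻¹ • z‖ = ‖z‖ / R := by
    rw [norm_smul_of_nonneg (inv_nonneg.2 hR.le), inv_mul_eq_div]
  have := h (x := R⁻¹ • x) (y := R⁻¹ • y) (by rwa [hscale, div_le_one hR])
    (by rwa [hscale, div_le_one hR]) (by rwa [← smul_sub, hscale, le_div_iff₀ hR])
  rwa [← smul_add, hscale, div_le_iff₀ hR] at this

section ChebyshevCenter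

variable {ι E : Type*} [SeminormedAddCommGroup E]

noncomputable def supDist (v : ι → E) (x : E) : ℝ := ⨆ i, ‖x - v i‖

noncomputable def chebyshevRadius (v : ι → E) : ℝ := ⨅ x, supDist v x

variable {v : ι → E}

lemma supDist_nonneg (x : E) : 0 ≤ supDist v x := Real.iSup_nonneg fun _ => norm_nonneg _

lemma chebyshevRadius_nonneg : 0 ≤ chebyshevRadius v := Real.iInf_nonneg supDist_nonneg

lemma chebyshevRadius_le_supDist (x : E) : chebyshevRadius v ≤ supDist v x :=
  ciInf_le ⟨0, forall_mem_range.2 supDist_nonneg⟩ x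

lemma norm_sub_le_supDist (hv : Bornology.IsBounded (range v)) (x : E) (i : ι) :
    ‖x - v i‖ ≤ supDist v x := by
  obtain ⟨C, hC⟩ := hv.exists_norm_le
  refine le_ciSup (f := fun i => ‖x - v i‖) ⟨‖x‖ + C, forall_mem_range.2 fun j => ?_⟩ i
  exact (norm_sub_le _ _).trans (add_le_add_right (hC _ (mem_range_self j)) _)

lemma supDist_le [Nonempty ι] {x : E} {R : ℝ} (h : ∀ i, ‖x - v i‖ ≤ R) : supDist v x ≤ R :=
  ciSup_le h

lemma lipschitzWith_supDist [Nonempty ι] (hv : Bornology.IsBounded (range v)) :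
    LipschitzWith 1 (supDist v) :=
  LipschitzWith.of_le_add fun x y => supDist_le fun i =>
    calc ‖x - v i‖ ≤ ‖x - y‖ + ‖y - v i‖ := norm_sub_le_norm_sub_add_norm_sub ..
      _ ≤ ‖x - y‖ + supDist v y := by gcongr; exact norm_sub_le_supDist hv y i
      _ = supDist v y + dist x y := by rw [dist_eq_norm, add_comm]

variable [NormedSpace ℝ E] [UniformConvexSpace E]

lemma exists_forall_supDist_midpoint_le [Nonempty ι] (hv : Bornology.IsBounded (range v))
    {ε : ℝ} (hε : 0 < ε) :
    ∃ δ, 0 < δ ∧ ∀ ⦃R : ℝ⦄, 0 < R → ∀ ⦃x y : E⦄, supDist v x ≤ R → supDist v y ≤ R →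
      ε * R ≤ ‖x - y‖ → supDist v ((2⁻¹ : ℝ) • (x + y)) ≤ (1 - δ) * R := by
  obtain ⟨δ, hδ, h⟩ := exists_forall_norm_add_le_two_sub_mul (E := E) hε
  refine ⟨δ / 2, by positivity, fun R hR x y hx hy hxy => supDist_le fun i => ?_⟩
  have hsum := h hR ((norm_sub_le_supDist hv x i).trans hx) ((norm_sub_le_supDist hv y i).trans hy)
    (by rwa [sub_sub_sub_cancel_right])
  calc ‖(2⁻¹ : ℝ) • (x + y) - v i‖ = 2⁻¹ * ‖x - v i + (y - v i)‖ := by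
        rw [← norm_smul_of_nonneg (by norm_num)]; congr 1; module
    _ ≤ 2⁻¹ * ((2 - δ) * R) := by gcongr
    _ = (1 - δ / 2) * R := by ring

lemma exists_forall_norm_sub_lt_of_supDist_le [Nonempty ι] (hv : Bornology.IsBounded (range v))
    {ε : ℝ} (hε : 0 < ε) :
    ∃ δ, 0 < δ ∧ ∀ ⦃x y : E⦄, supDist v x ≤ chebyshevRadius v + δ →
      supDist v y ≤ chebyshevRadius v + δ → ‖x - y‖ < ε := by
  set r₀ := chebyshevRadius v
  have hr₀ : 0 ≤ r₀ := chebyshevRadius_nonneg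
  obtain ⟨δ, hδ, hmid⟩ :=
    exists_forall_supDist_midpoint_le hv (div_pos hε (by positivity : 0 < r₀ + 1))
  refine ⟨min 1 (δ * ε / 4), by positivity, fun x y hx hy => ?_⟩
  by_contra! hxy
  set R := r₀ + min 1 (δ * ε / 4)
  have hεR : ε ≤ 2 * R := by
    obtain ⟨i⟩ := ‹Nonempty ι›
    calc ε ≤ ‖x - y‖ := hxy
      _ ≤ ‖x - v i‖ + ‖y - v i‖ := by
        rw [norm_sub_rev y]; exact norm_sub_le_norm_sub_add_norm_sub _ _ _
      _ ≤ 2 * R := by linarith [norm_sub_le_supDist hv x i, norm_sub_le_supDist hv y i]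
  have hRle : R ≤ r₀ + 1 := by linarith [min_le_left 1 (δ * ε / 4)]
  have hcenter := hmid (by linarith) hx hy <| by
    calc ε / (r₀ + 1) * R ≤ ε := by rw [div_mul_eq_mul_div, div_le_iff₀ (by positivity)]; gcongr
      _ ≤ ‖x - y‖ := hxy
  -- `R - r₀ ≤ δ ε / 4` while `δ R ≥ δ ε / 2`, so the midpoint would beat the Chebyshev radius
  have := chebyshevRadius_le_supDist (v := v) ((2⁻¹ : ℝ) • (x + y))
  nlinarith [min_le_right 1 (δ * ε / 4)]

theorem exists_supDist_eq_chebyshevRadius [CompleteSpace E] [Nonempty ι]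
    (hv : Bornology.IsBounded (range v)) : ∃ c, supDist v c = chebyshevRadius v := by
  obtain ⟨u, -, hu, hmem⟩ := exists_seq_tendsto_sInf (range_nonempty (supDist v))
    ⟨0, forall_mem_range.2 supDist_nonneg⟩
  choose x hx using hmem
  have hlim : Tendsto (fun n => supDist v (x n)) atTop (𝓝 (chebyshevRadius v)) := by
    rw [funext hx]; exact hu
  have hcauchy : CauchySeq x := Metric.cauchySeq_iff'.2 fun ε hε => by
    obtain ⟨δ, hδ, hclose⟩ := exists_forall_norm_sub_lt_of_supDist_le hv hε
    obtain ⟨N, hN⟩ :=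
      (hlim.eventually (eventually_le_nhds (lt_add_of_pos_right _ hδ))).exists_forall_of_atTop
    exact ⟨N, fun n hn => by rw [dist_eq_norm]; exact hclose (hN n hn) (hN N le_rfl)⟩
  obtain ⟨c, hc⟩ := cauchySeq_tendsto_of_complete hcauchy
  exact ⟨c, tendsto_nhds_unique (((lipschitzWith_supDist hv).continuous.tendsto c).comp hc) hlim⟩

end ChebyshevCenter

theorem eq_of_supDist_eq_chebyshevRadius {ι E : Type*} [NormedAddCommGroup E] [NormedSpace ℝ E]
    [UniformConvexSpace E] [Nonempty ι] {v : ι → E} (hv : Bornology.IsBounded (range v)) {x y : E}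
    (hx : supDist v x = chebyshevRadius v) (hy : supDist v y = chebyshevRadius v) : x = y := by
  by_contra hne
  obtain ⟨δ, hδ, hclose⟩ := exists_forall_norm_sub_lt_of_supDist_le hv (norm_sub_pos_iff.2 hne)
  exact lt_irrefl _ (hclose (by linarith) (by linarith))

section Representation

variable {G R E : Type*} [Group G] [Semiring R] [SeminormedAddCommGroup E] [Module R E]
  (π : G →* (E ≃ₗᵢ[R] E))

lemma supDist_orbit_map (ξ x : E) (g : G) :
    supDist (fun h => π h ξ) (π g x) = supDist (fun h => π h ξ) x := by
  unfold supDist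
  rw [← (Equiv.mulLeft g).iSup_comp]
  congr 1 with h
  simp only [Equiv.coe_mulLeft, map_mul, LinearIsometryEquiv.coe_mul, Function.comp_apply,
    ← map_sub, LinearIsometryEquiv.norm_map]

lemma norm_map_mul_sub_le (a b : G) (ξ : E) :
    ‖π (a * b) ξ - ξ‖ ≤ ‖π a ξ - ξ‖ + ‖π b ξ - ξ‖ :=
  calc ‖π (a * b) ξ - ξ‖ = ‖π a (π b ξ - ξ) + (π a ξ - ξ)‖ := by
        rw [map_mul, LinearIsometryEquiv.coe_mul, Function.comp_apply, map_sub]; abel_nf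
    _ ≤ ‖π a ξ - ξ‖ + ‖π b ξ - ξ‖ := by
        rw [add_comm ‖π a ξ - ξ‖, ← LinearIsometryEquiv.norm_map (π a) (π b ξ - ξ)]
        exact norm_add_le _ _

lemma norm_map_list_prod_sub_le {ξ : E} {c : ℝ} {l : List G} (h : ∀ g ∈ l, ‖π g ξ - ξ‖ ≤ c) :
    ‖π l.prod ξ - ξ‖ ≤ l.length * c := by
  induction l with
  | nil => simp
  | cons a l ih =>
    rw [List.prod_cons, List.length_cons, Nat.cast_succ, add_mul, one_mul, add_comm]
    exact (norm_map_mul_sub_le π a l.prod ξ).trans <|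
      add_le_add (h a List.mem_cons_self) (ih fun g hg => h g (List.mem_cons_of_mem a hg))

lemma norm_map_sub_le_two_mul {g : G} {ξ η : E} (hη : π g η = η) :
    ‖π g ξ - ξ‖ ≤ 2 * ‖ξ - η‖ :=
  calc ‖π g ξ - ξ‖ = ‖π g (ξ - η) - (ξ - η)‖ := by rw [map_sub, hη, sub_sub_sub_cancel_right]
    _ ≤ ‖π g (ξ - η)‖ + ‖ξ - η‖ := norm_sub_le _ _
    _ = 2 * ‖ξ - η‖ := by rw [LinearIsometryEquiv.norm_map, two_mul]

end Representation

theorem exists_forall_map_eq_self_norm_sub_le {G E : Type*} [Group G] [NormedAddCommGroup E]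
    [NormedSpace ℝ E] [CompleteSpace E] [UniformConvexSpace E] (π : G →* (E ≃ₗᵢ[ℝ] E)) {ξ : E}
    {c : ℝ} (hc : ∀ g, ‖π g ξ - ξ‖ ≤ c) : ∃ η, (∀ g, π g η = η) ∧ ‖ξ - η‖ ≤ c := by
  set v : G → E := fun g => π g ξ
  have hv : Bornology.IsBounded (range v) :=
    isBounded_iff_forall_norm_le.2 ⟨‖ξ‖, forall_mem_range.2 fun g => (π g).norm_map ξ |>.le⟩
  obtain ⟨η, hη⟩ := exists_supDist_eq_chebyshevRadius hv
  refine ⟨η, fun g => eq_of_supDist_eq_chebyshevRadius hv (by rw [supDist_orbit_map, hη]) hη, ?_⟩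
  calc ‖ξ - η‖ = ‖η - v 1‖ := by simp [v, norm_sub_rev]
    _ ≤ supDist v η := norm_sub_le_supDist hv η 1
    _ ≤ supDist v ξ := hη ▸ chebyshevRadius_le_supDist ξ
    _ ≤ c := supDist_le fun g => norm_sub_rev ξ (v g) ▸ hc g

lemma Real.iSup_subtype_le_of_subset {α : Type*} {f : α → ℝ} {s t : Set α} (hst : s ⊆ t)
    (hf₀ : ∀ x, 0 ≤ f x) (hf : BddAbove (range f)) : ⨆ x : s, f x ≤ ⨆ x : t, f x :=
  Real.iSup_le (fun x => le_ciSup (f := fun y : t => f y)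
    (hf.mono (range_comp_subset_range Subtype.val f)) ⟨x, hst x.2⟩)
    (Real.iSup_nonneg fun x => hf₀ x)

theorem bounded_generation_banach_property_T_general
    (G : Type*) [Group G] [TopologicalSpace G]
    (k : ℕ) (H : Fin k → Subgroup G)
    (hbg : ∃ ν : ℕ, ∀ g : G, ∃ l : List G,
      l.length ≤ ν ∧ (∀ x ∈ l, ∃ i : Fin k, x ∈ H i) ∧ l.prod = g)
    (E : Type*) [NormedAddCommGroup E] [NormedSpace ℝ E] [CompleteSpace E]
    (hE : UniformlyConvex E)
    (hrel : ∀ i : Fin k, ∀ π : G →* (E ≃ₗᵢ[ℝ] E), (∀ ξ : E, Continuous fun g : G => π g ξ) →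
      ∀ γ : ℝ, 0 < γ → ∃ K : Set G, IsCompact K ∧ ∃ ε : ℝ, 0 < ε ∧
        ∀ ξ : E, ‖ξ‖ = 1 → (⨆ g : K, ‖π g.1 ξ - ξ‖) < ε →
          ∃ η : E, (∀ h ∈ H i, π h η = η) ∧ ‖ξ - η‖ < γ)
    (π : G →* (E ≃ₗᵢ[ℝ] E)) (hcont : ∀ ξ : E, Continuous fun g : G => π g ξ)
    (hfix : ∀ ξ : E, (∀ g : G, π g ξ = ξ) → ξ = 0) :
    ∃ K : Set G, IsCompact K ∧ ∃ ε : ℝ, 0 < ε ∧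
      ∀ ξ : E, ‖ξ‖ = 1 → ε ≤ ⨆ g : K, ‖π g.1 ξ - ξ‖ := by
  have := hE.uniformConvexSpace
  obtain ⟨ν, hν⟩ := hbg
  set γ : ℝ := (2 * (ν + 1))⁻¹
  choose K hK ε hε hnear using fun i => hrel i π hcont γ (by positivity)
  obtain ⟨⟨ε₀, hε₀⟩, hε₀le⟩ := Finite.exists_ge (α := Ioi (0 : ℝ)) fun i => ⟨ε i, hε i⟩
  refine ⟨⋃ i, K i, isCompact_iUnion hK, ε₀, hε₀, fun ξ hξ => ?_⟩
  by_contra! hsmall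
  have hbdd : BddAbove (range fun g => ‖π g ξ - ξ‖) :=
    ⟨2, forall_mem_range.2 fun g => (norm_sub_le _ _).trans (by simp [hξ, one_add_one_eq_two])⟩
  have hgen (i : Fin k) (h : G) (hh : h ∈ H i) : ‖π h ξ - ξ‖ ≤ 2 * γ := by
    obtain ⟨η, hηfix, hη⟩ := hnear i ξ hξ <|
      (Real.iSup_subtype_le_of_subset (subset_iUnion K i) (fun _ => norm_nonneg _) hbdd).trans_lt
        (hsmall.trans_le (hε₀le i))
    exact (norm_map_sub_le_two_mul π (hηfix h hh)).trans (by gcongr)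
  have hall (g : G) : ‖π g ξ - ξ‖ ≤ ν * (2 * γ) := by
    obtain ⟨l, hlen, hl, rfl⟩ := hν g
    refine (norm_map_list_prod_sub_le π fun x hx => ?_).trans (by gcongr)
    obtain ⟨i, hi⟩ := hl x hx
    exact hgen i x hi
  obtain ⟨η, hηfix, hη⟩ := exists_forall_map_eq_self_norm_sub_le π hall
  rw [hfix η hηfix, sub_zero, hξ] at hη
  have hγν : (ν : ℝ) * (2 * γ) < 1 := by
    simp only [γ]
    field_simp
    linarith
  linarith

/-- **Bounded generation and relative property (T_E) imply property (T_E)**: let `G` be a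
topological group boundedly generated by subgroups `H 0, …, H (k-1)` (every `g ∈ G` is a
product of at most `ν` elements of the union of the `H i`), let `E` be a uniformly convex real
Banach space, and suppose each pair `(G, H i)` has relative property (T_E).  Then for every
continuous linear isometric representation `π` of `G` on `E` whose only fixed vector is `0`,
there are a compact `K ⊆ G` and `ε > 0` with `sup_{g ∈ K} ‖π(g)ξ - ξ‖ ≥ ε` for every unit
vector `ξ`. -/
theorem bounded_generation_banach_property_T
    (G : Type*) [Group G] [TopologicalSpace G] [IsTopologicalGroup G]
    (k : ℕ) (H : Fin k → Subgroup G)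
    (hbg : ∃ ν : ℕ, ∀ g : G, ∃ l : List G,
      l.length ≤ ν ∧ (∀ x ∈ l, ∃ i : Fin k, x ∈ H i) ∧ l.prod = g)
    (E : Type*) [NormedAddCommGroup E] [NormedSpace ℝ E] [CompleteSpace E]
    (hE : UniformlyConvex E)
    (hrel : ∀ i : Fin k, ∀ π : G →* (E ≃ₗᵢ[ℝ] E), (∀ ξ : E, Continuous fun g : G => π g ξ) →
      ∀ γ : ℝ, 0 < γ → ∃ K : Set G, IsCompact K ∧ ∃ ε : ℝ, 0 < ε ∧
        ∀ ξ : E, ‖ξ‖ = 1 → (⨆ g : K, ‖π g.1 ξ - ξ‖) < ε →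
          ∃ η : E, (∀ h ∈ H i, π h η = η) ∧ ‖ξ - η‖ < γ)
    (π : G →* (E ≃ₗᵢ[ℝ] E)) (hcont : ∀ ξ : E, Continuous fun g : G => π g ξ)
    (hfix : ∀ ξ : E, (∀ g : G, π g ξ = ξ) → ξ = 0) :
    ∃ K : Set G, IsCompact K ∧ ∃ ε : ℝ, 0 < ε ∧
      ∀ ξ : E, ‖ξ‖ = 1 → ε ≤ ⨆ g : K, ‖π g.1 ξ - ξ‖ :=
  bounded_generation_banach_property_T_general G k H hbg E hE hrel π hcont hfix
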